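/- No two consecutive moves in the recursive Hanoi sequence hanoi(N, 1, 3, 2), executed from the initial state, move the same disc. -/

import Mathlib

/- Pegs are `Fin 3` (peg `0` = "peg 1", peg `1` = "peg 2", peg `2` = "peg 3").
Discs are `Fin N`, labelled by increasing size; a state assigns each disc to a
peg (the stacking order is determined by size in any legal state). -/

/-- A move `(i, j)` is legal in state `S` if `i ≠ j`, peg `i` is nonempty with
smallest (top) disc `d`, and `d` is smaller than every disc on peg `j`. -/
def legalMove {N : ℕ} (S : Fin N → Fin 3) (m : Fin 3 × Fin 3) : Prop :=
  m.1 ≠ m.2 ∧ ∃ d, S d = m.1 ∧ (∀ e, S e = m.1 → d ≤ e) ∧ (∀ e, S e = m.2 → d < e)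

open Classical in
/-- Executing a move transfers the smallest disc on the source peg (if any). -/
noncomputable def applyMove {N : ℕ} (S : Fin N → Fin 3) (m : Fin 3 × Fin 3) :
    Fin N → Fin 3 :=
  if h : ∃ d, S d = m.1 ∧ ∀ e, S e = m.1 → d ≤ e then
    Function.update S h.choose m.2
  else S

noncomputable def applyMoves {N : ℕ} (S : Fin N → Fin 3) :
    List (Fin 3 × Fin 3) → (Fin N → Fin 3)
  | [] => S
  | m :: ms => applyMoves (applyMove S m) ms

/-- Every move in the list is legal in the state at which it is executed. -/
def legalSeq {N : ℕ} (S : Fin N → Fin 3) : List (Fin 3 × Fin 3) → Prop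
  | [] => True
  | m :: ms => legalMove S m ∧ legalSeq (applyMove S m) ms

/-- The recursive Hanoi move sequence. -/
def hanoi : ℕ → Fin 3 → Fin 3 → Fin 3 → List (Fin 3 × Fin 3)
  | 0, _, _, _ => []
  | 1, i, j, _ => [(i, j)]
  | n + 2, i, j, k => hanoi (n + 1) i k j ++ [(i, j)] ++ hanoi (n + 1) k j i

open Classical in
/-- The disc moved by move `m` in state `S` (the smallest disc on the source
peg), if any. -/
noncomputable def movedDisc {N : ℕ} (S : Fin N → Fin 3) (m : Fin 3 × Fin 3) :
    Option (Fin N) :=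
  if h : ∃ d, S d = m.1 ∧ ∀ e, S e = m.1 → d ≤ e then some h.choose else none

/-- The list of discs moved, in order, when executing a list of moves. -/
noncomputable def trace {N : ℕ} (S : Fin N → Fin 3) :
    List (Fin 3 × Fin 3) → List (Option (Fin N))
  | [] => []
  | m :: ms => movedDisc S m :: trace (applyMove S m) ms

-- auxiliary development
private def rulerO : ℕ → List (Option ℕ)
  | 0 => []
  | n + 1 => rulerO n ++ [some n] ++ rulerO n

private lemma rulerO_mem {n : ℕ} {x : Option ℕ} (hx : x ∈ rulerO n) :
    ∃ m, m < n ∧ x = some m := by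
  induction n with
  | zero => simp [rulerO] at hx
  | succ n ih =>
    simp only [rulerO, List.mem_append, List.mem_singleton] at hx
    rcases hx with (hx | hx) | hx
    · obtain ⟨m, hm, rfl⟩ := ih hx; exact ⟨m, by omega, rfl⟩
    · exact ⟨n, by omega, hx⟩
    · obtain ⟨m, hm, rfl⟩ := ih hx; exact ⟨m, by omega, rfl⟩

private lemma rulerO_chain (n : ℕ) : List.Chain' (· ≠ ·) (rulerO n) := by
  induction n with
  | zero => simp [rulerO, List.Chain']
  | succ n ih =>
    rw [rulerO, List.append_assoc, List.Chain', List.isChain_append]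
    refine ⟨ih, ?_, ?_⟩
    · rw [List.isChain_append]
      refine ⟨List.isChain_singleton _, ih, ?_⟩
      intro x hx y hy
      simp at hx
      subst hx
      have := rulerO_mem (List.mem_of_mem_head? hy)
      obtain ⟨m, hm, rfl⟩ := this
      simp; omega
    · intro x hx y hy
      have := rulerO_mem (List.mem_of_mem_getLast? hx)
      obtain ⟨m, hm, rfl⟩ := this
      simp at hy
      subst hy
      simp; omega

private lemma applyMoves_append {N : ℕ} (S : Fin N → Fin 3)
    (l1 l2 : List (Fin 3 × Fin 3)) :
    applyMoves S (l1 ++ l2) = applyMoves (applyMoves S l1) l2 := by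
  induction l1 generalizing S with
  | nil => simp [applyMoves]
  | cons m ms ih => simp [applyMoves, ih]

private lemma trace_append {N : ℕ} (S : Fin N → Fin 3)
    (l1 l2 : List (Fin 3 × Fin 3)) :
    trace S (l1 ++ l2) = trace S l1 ++ trace (applyMoves S l1) l2 := by
  induction l1 generalizing S with
  | nil => simp [trace, applyMoves]
  | cons m ms ih => simp [trace, applyMoves, ih]

private lemma movedDisc_eq {N : ℕ} (S : Fin N → Fin 3) (m : Fin 3 × Fin 3)
    (d : Fin N) (h1 : S d = m.1) (h2 : ∀ e, S e = m.1 → d ≤ e) :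
    movedDisc S m = some d ∧ applyMove S m = Function.update S d m.2 := by
  have hex : ∃ d, S d = m.1 ∧ ∀ e, S e = m.1 → d ≤ e := ⟨d, h1, h2⟩
  have hc : hex.choose = d :=
    le_antisymm (hex.choose_spec.2 d h1) (h2 _ hex.choose_spec.1)
  constructor
  · rw [movedDisc, dif_pos hex, hc]
  · rw [applyMove, dif_pos hex, hc]

private lemma key {N : ℕ} : ∀ n, n ≤ N → ∀ i j k : Fin 3, i ≠ j → i ≠ k → j ≠ k →
    ∀ S : Fin N → Fin 3, (∀ d : Fin N, (d : ℕ) < n → S d = i) →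
    (trace S (hanoi n i j k)).map (Option.map Fin.val) = rulerO n ∧
      applyMoves S (hanoi n i j k) = fun d : Fin N => if (d : ℕ) < n then j else S d := by
  intro n
  induction n using Nat.strong_induction_on with
  | _ n IH =>
    match n with
    | 0 =>
      intro _ i j k _ _ _ S _
      constructor
      · simp [hanoi, trace, rulerO]
      · funext d; simp [hanoi, applyMoves]
    | 1 =>
      intro hN i j k hij hik hjk S hS
      have h0 : (0 : ℕ) < N := hN
      set d0 : Fin N := ⟨0, h0⟩ with hd0
      have hS0 : S d0 = i := hS d0 (by simp [hd0])
      have hmin : ∀ e, S e = (i, j).1 → d0 ≤ e := fun e _ => by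
        simp [hd0, Fin.le_def]
      obtain ⟨hm, ha⟩ := movedDisc_eq S (i, j) d0 hS0 hmin
      constructor
      · simp [hanoi, trace, rulerO, hm, hd0]
      · funext d
        simp only [hanoi, applyMoves, ha]
        by_cases hd : (d : ℕ) < 1
        · have : d = d0 := by ext; simp [hd0]; omega
          subst this
          simp [hd]
        · have : d ≠ d0 := by
            intro h; rw [h] at hd; simp [hd0] at hd
          simp [Function.update_of_ne this, hd]
    | (n + 2) =>
      intro hN i j k hij hik hjk S hS
      have hN1 : n + 1 ≤ N := by omega
      have hn1 : n + 1 < N := by omega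
      obtain ⟨ht1, ha1⟩ := IH (n + 1) (by omega) hN1 i k j hik hij (Ne.symm hjk) S
        (fun d hd => hS d (by omega))
      have hS1n : applyMoves S (hanoi (n + 1) i k j) ⟨n + 1, hn1⟩
          = ((i, j) : Fin 3 × Fin 3).1 := by
        rw [ha1]; simpa using hS ⟨n + 1, hn1⟩ (by simp)
      have hmin : ∀ e, applyMoves S (hanoi (n + 1) i k j) e = ((i, j) : Fin 3 × Fin 3).1 →
          (⟨n + 1, hn1⟩ : Fin N) ≤ e := by
        intro e he
        rw [ha1] at he
        simp only at he
        by_cases hlt : (e : ℕ) < n + 1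
        · rw [if_pos hlt] at he; exact absurd he.symm hik
        · simp only [Fin.le_def]; omega
      obtain ⟨hm, ha⟩ := movedDisc_eq _ (i, j) ⟨n + 1, hn1⟩ hS1n hmin
      have hS2 : ∀ d : Fin N, (d : ℕ) < n + 1 →
          applyMove (applyMoves S (hanoi (n + 1) i k j)) (i, j) d = k := by
        intro d hd
        have hne : d ≠ ⟨n + 1, hn1⟩ := by
          intro h; subst h; simp at hd
        rw [ha, Function.update_of_ne hne, ha1]
        simp [hd]
      obtain ⟨ht2, ha2⟩ := IH (n + 1) (by omega) hN1 k j i (Ne.symm hjk) (Ne.symm hik)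
        (Ne.symm hij) _ hS2
      have hsplit : hanoi (n + 2) i j k
          = hanoi (n + 1) i k j ++ ((i, j) :: hanoi (n + 1) k j i) := by
        show hanoi (n + 1) i k j ++ [(i, j)] ++ hanoi (n + 1) k j i = _
        simp
      constructor
      · rw [hsplit, trace_append]
        simp only [trace, List.map_append, List.map_cons, ht1, ht2, hm]
        simp [rulerO]
      · rw [hsplit, applyMoves_append]
        show applyMoves (applyMove (applyMoves S (hanoi (n + 1) i k j)) (i, j))
          (hanoi (n + 1) k j i) = _
        rw [ha2]
        funext d
        by_cases h1 : (d : ℕ) < n + 1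
        · simp [h1, show (d : ℕ) < n + 2 by omega]
        · simp only [if_neg h1]
          by_cases h2 : (d : ℕ) = n + 1
          · have hd : d = ⟨n + 1, hn1⟩ := by ext; simp [h2]
            subst hd
            rw [ha]
            simp [show n + 1 < n + 2 by omega]
          · have hne : d ≠ ⟨n + 1, hn1⟩ := by
              intro h; subst h; simp at h2
            rw [ha, Function.update_of_ne hne, ha1]
            simp only [if_neg h1]
            rw [if_neg (by omega)]

/-- executing `hanoi N 0 2 1` from the initial state (all `N`
discs on peg 1 = `0`), no two consecutive moves move the same disc. -/
theorem hanoi_no_consecutive_same_disc (N : ℕ) :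
    List.Chain' (· ≠ ·)
      (trace (fun _ : Fin N => (0 : Fin 3)) (hanoi N 0 2 1)) := by
  have hk := key N le_rfl (0 : Fin 3) 2 1 (by decide) (by decide) (by decide)
    (fun _ => 0) (fun _ _ => rfl)
  have hchain : List.Chain' (· ≠ ·)
      ((trace (fun _ : Fin N => (0 : Fin 3)) (hanoi N 0 2 1)).map (Option.map Fin.val)) := by
    rw [hk.1]; exact rulerO_chain N
  rw [List.Chain', List.isChain_map] at hchain
  exact hchain.imp (fun a b h hab => h (by rw [hab]))
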